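/- If $e \equiv 0 \pmod{16}$, then the coefficients $w_g$ of $\prod_{r \ge 1}(1+q^r)^{-e}\prod_{s \ge 1}(1-q^{2s})^{-(24-e)/2}$ satisfy $w_g \equiv 0 \pmod{16}$ for every odd $g > 1$. -/

import Mathlib

open PowerSeries Finset

/-- Integer power of a power series over `ℚ`, using the power-series inverse
for negative exponents. -/
noncomputable def zp (f : PowerSeries ℚ) (n : ℤ) : PowerSeries ℚ :=
  if 0 ≤ n then f ^ n.toNat else f⁻¹ ^ (-n).toNat

/-- The coefficient `w_g` of `∏_{r ≥ 1} (1+q^r)^{-e} · ∏_{s ≥ 1} (1-q^{2s})^{-(24-e)/2}`.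
Since each factor with index `> g` is `1 + O(q^{g+1})`, the coefficient of `q^g`
equals that of the product truncated at index `g`. -/
noncomputable def W (e : ℤ) (g : ℕ) : ℚ :=
  PowerSeries.coeff (R := ℚ) g
    ((∏ r ∈ Icc 1 g, zp (1 + PowerSeries.X ^ r) (-e)) *
     (∏ s ∈ Icc 1 g, zp (1 - PowerSeries.X ^ (2 * s)) (-((24 - e) / 2))))

/-- The coefficient `c_g` of the Yau–Zaslow series `∏_{s ≥ 1} (1-q^s)^{-24}`. -/
noncomputable def C (g : ℕ) : ℚ :=
  PowerSeries.coeff (R := ℚ) g (∏ s ∈ Icc 1 g, ((1 - PowerSeries.X ^ s)⁻¹) ^ 24)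

/-! Modulo 16 every factor is a power series in `q²`: `1 - q^{2s}` visibly so, and `(1 + q^r)^16`
because `16 ∣ C(16, k)` for odd `k`. Such series form a subring of `(ℤ/16)⟦q⟧` that contains
the inverses of its units, so the factors raised to the exponents `-e ∈ 16ℤ` and `-(24-e)/2`
stay in it. All factors are units of `ℤ⟦q⟧`, hence `w_g` is an integer whose reduction mod 16 is an
odd coefficient of such a series, i.e. zero. -/

namespace PowerSeries

section Even

variable (R : Type*) [CommRing R]

def evenSubring : Subring R⟦X⟧ where
  carrier := {f | ∀ n, Odd n → coeff n f = 0}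
  one_mem' n hn := by rw [coeff_one, if_neg hn.pos.ne']
  zero_mem' _ _ := map_zero _
  add_mem' hf hg n hn := by rw [map_add, hf n hn, hg n hn, add_zero]
  neg_mem' hf n hn := by rw [map_neg, hf n hn, neg_zero]
  mul_mem' {f g} hf hg n hn := by
    rw [coeff_mul]
    refine Finset.sum_eq_zero fun p hp => ?_
    rw [HasAntidiagonal.mem_antidiagonal] at hp
    rcases Nat.even_or_odd p.1 with h1 | h1
    · rw [hg _ (by rw [← hp] at hn; exact (Nat.odd_add'.mp hn).mpr h1), mul_zero]
    · rw [hf _ h1, zero_mul]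

variable {R}

theorem X_pow_mem_evenSubring {n : ℕ} (hn : Even n) : (X ^ n : R⟦X⟧) ∈ evenSubring R :=
  fun m hm => by rw [coeff_X_pow, if_neg (by rintro rfl; exact Nat.not_even_iff_odd.mpr hm hn)]

theorem inv_mem_evenSubring {u : R⟦X⟧ˣ} (hu : (u : R⟦X⟧) ∈ evenSubring R) :
    (↑u⁻¹ : R⟦X⟧) ∈ evenSubring R := by
  intro n
  induction n using Nat.strong_induction_on with
  | _ n ih =>
    intro hn
    have hcoeff : coeff n ((u : R⟦X⟧) * ((u⁻¹ : R⟦X⟧ˣ) : R⟦X⟧)) = 0 := by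
      rw [Units.mul_inv, coeff_one, if_neg hn.pos.ne']
    rw [coeff_mul, Finset.sum_eq_single (0, n)] at hcoeff
    · rw [coeff_zero_eq_constantCoeff_apply] at hcoeff
      exact ((isUnit_iff_constantCoeff.mp u.isUnit).mul_right_eq_zero).mp hcoeff
    · intro p hp hne
      rw [HasAntidiagonal.mem_antidiagonal] at hp
      rcases Nat.even_or_odd p.1 with h1 | h1
      · have hp1 : p.1 ≠ 0 := fun h0 => hne (Prod.ext h0 (by omega))
        rw [ih p.2 (by omega) (by rw [← hp] at hn; exact (Nat.odd_add'.mp hn).mpr h1), mul_zero]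
      · rw [hu _ h1, zero_mul]
    · simp

variable (R) in
def evenUnits : Subgroup R⟦X⟧ˣ where
  carrier := {u | (u : R⟦X⟧) ∈ evenSubring R}
  one_mem' := (evenSubring R).one_mem
  mul_mem' hu hv := (evenSubring R).mul_mem hu hv
  inv_mem' := inv_mem_evenSubring

end Even

theorem one_add_X_pow_pow_sixteen_mem_evenSubring (r : ℕ) :
    ((1 + X ^ r : (ZMod 16)⟦X⟧) ^ 16) ∈ evenSubring (ZMod 16) := by
  have hchoose : ∀ k < 17, Odd k → ((Nat.choose 16 k : ℕ) : ZMod 16) = 0 := by decide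
  intro n hn
  rw [add_comm, add_pow, map_sum]
  refine Finset.sum_eq_zero fun k hk => ?_
  rw [one_pow, mul_one, ← pow_mul, ← map_natCast (C (R := ZMod 16)), coeff_mul_C, coeff_X_pow]
  split_ifs with hnk
  · rw [hchoose k (Finset.mem_range.mp hk) (Nat.odd_mul.mp (hnk ▸ hn)).2, mul_zero]
  · rw [zero_mul]

end PowerSeries

theorem zp_coe_units (u : ℚ⟦X⟧ˣ) (n : ℤ) : zp u n = ↑(u ^ n) := by
  unfold zp
  split_ifs with hn
  · rw [← Int.toNat_of_nonneg hn, zpow_natCast, Units.val_pow_eq_pow_val, Int.toNat_natCast]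
  · have hinv : (u : ℚ⟦X⟧)⁻¹ = ↑u⁻¹ :=
      (inv_eq_iff_mul_eq_one (isUnit_iff_constantCoeff.mp u.isUnit).ne_zero).mpr u.inv_mul
    rw [hinv, ← Units.val_pow_eq_pow_val, ← zpow_natCast, ← zpow_neg_one, ← zpow_mul,
      Int.toNat_of_nonneg (by omega), neg_one_mul, neg_neg]

noncomputable def evenModSixteenUnits : Subgroup ℤ⟦X⟧ˣ :=
  (evenUnits (ZMod 16)).comap (Units.map (map (Int.castRingHom (ZMod 16))).toMonoidHom)

theorem mem_evenModSixteenUnits {u : ℤ⟦X⟧ˣ} :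
    u ∈ evenModSixteenUnits ↔ map (Int.castRingHom (ZMod 16)) ↑u ∈ evenSubring (ZMod 16) :=
  Iff.rfl

noncomputable def evenModSixteenSeries : Submonoid ℚ⟦X⟧ :=
  evenModSixteenUnits.toSubmonoid.map
    ((map (Int.castRingHom ℚ)).toMonoidHom.comp (Units.coeHom ℤ⟦X⟧))

theorem exists_coeff_eq_sixteen_mul {f : ℚ⟦X⟧} (hf : f ∈ evenModSixteenSeries) {n : ℕ}
    (hn : Odd n) : ∃ k : ℤ, coeff n f = 16 * k := by
  obtain ⟨u, hu, rfl⟩ := hf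
  have hmod : ((coeff n (u : ℤ⟦X⟧) : ℤ) : ZMod 16) = 0 := by
    simpa using mem_evenModSixteenUnits.mp hu n hn
  obtain ⟨k, hk⟩ := (ZMod.intCast_zmod_eq_zero_iff_dvd _ 16).mp hmod
  exact ⟨k, by simp [hk]⟩

theorem zp_map_mem_evenModSixteenSeries {F : ℤ⟦X⟧} (hF : IsUnit F) {n : ℤ}
    (hn : hF.unit ^ n ∈ evenModSixteenUnits) :
    zp (map (Int.castRingHom ℚ) F) n ∈ evenModSixteenSeries := by
  rw [← hF.unit_spec]
  change zp ↑(Units.map (map (Int.castRingHom ℚ)).toMonoidHom hF.unit) n ∈ _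
  rw [zp_coe_units, ← map_zpow]
  exact ⟨_, hn, rfl⟩

theorem zp_one_add_X_pow_mem {r : ℕ} (hr : r ≠ 0) {m : ℤ} (hm : (16 : ℤ) ∣ m) :
    zp (1 + X ^ r) m ∈ evenModSixteenSeries := by
  have hF : IsUnit (1 + X ^ r : ℤ⟦X⟧) := isUnit_iff_constantCoeff.mpr (by simp [hr])
  obtain ⟨t, rfl⟩ := hm
  have h16 : hF.unit ^ 16 ∈ evenModSixteenUnits := by
    rw [mem_evenModSixteenUnits, Units.val_pow_eq_pow_val, hF.unit_spec, map_pow]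
    simpa using one_add_X_pow_pow_sixteen_mem_evenSubring r
  simpa using zp_map_mem_evenModSixteenSeries hF (n := 16 * t)
    (by rw [zpow_mul]; exact zpow_mem h16 t)

theorem zp_one_sub_X_pow_two_mul_mem {s : ℕ} (hs : s ≠ 0) (m : ℤ) :
    zp (1 - X ^ (2 * s)) m ∈ evenModSixteenSeries := by
  have hF : IsUnit (1 - X ^ (2 * s) : ℤ⟦X⟧) := isUnit_iff_constantCoeff.mpr (by simp [hs])
  have hmem : hF.unit ∈ evenModSixteenUnits := by
    rw [mem_evenModSixteenUnits, hF.unit_spec]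
    simpa using sub_mem (one_mem _) (X_pow_mem_evenSubring (R := ZMod 16) (even_two_mul s))
  simpa using zp_map_mem_evenModSixteenSeries hF (zpow_mem hmem m)

theorem stmt17_general (e : ℤ) (he : (16 : ℤ) ∣ e) (g : ℕ) (hodd : Odd g) :
    ∃ k : ℤ, W e g = 16 * k := by
  refine exists_coeff_eq_sixteen_mul
    (mul_mem (prod_mem fun r hr => ?_) (prod_mem fun s hs => ?_)) hodd
  · exact zp_one_add_X_pow_mem (by rw [mem_Icc] at hr; omega) (dvd_neg.mpr he)
  · exact zp_one_sub_X_pow_two_mul_mem (by rw [mem_Icc] at hs; omega) _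

theorem stmt17 (e : ℤ) (he : (16 : ℤ) ∣ e) (g : ℕ) (hodd : Odd g) (hg : 1 < g) :
    ∃ k : ℤ, W e g = 16 * k :=
  stmt17_general e he g hodd
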